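/- Define a symmetric ℤ[v,v⁻¹]-bilinear pairing on the free module with basis {V_n : n ≥ 0} by ⟨V_a, V_b⟩ = [(a+1)(b+1)], where [i] = (v^i − v^{−i})/(v − v^{−1}). Write P_m and S_n in this basis via the Chebyshev identification V_m V_n = V_{|m−n|} + V_{|m−n|+2} + ⋯ + V_{m+n}, where P_m = ∏_{p=0}^{m−1}(V_1 − v^{2p+1} − v^{−2p−1}) and S_n = ∏_{i=1}^{n}(V_1² − (v^i + v^{−i})²). Then ⟨P_m, S_n⟩ = δ_{m,n} · {2m+1}_{2m}, where {a}_k = {a}{a−1}⋯{a−k+1} and {i} = v^i − v^{−i}. -/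
import Mathlib

set_option synthInstance.maxHeartbeats 1000000
set_option maxHeartbeats 1000000

/-- `v`, an indeterminate, as an element of the field `ℚ(v)` of rational functions. -/
noncomputable def vv : RatFunc ℚ := RatFunc.X

/-- The balanced `q`-integer `{m} = v^m - v^{-m}`. -/
noncomputable def bk (m : ℤ) : RatFunc ℚ := vv ^ m - vv ^ (-m)

/-- The falling product `{a}_i = {a}{a-1}⋯{a-i+1}`. -/
noncomputable def bkp (a : ℤ) (i : ℕ) : RatFunc ℚ := ∏ j ∈ Finset.range i, bk (a - j)

/-- The balanced factorial `{n}! = {n}{n-1}⋯{1}`. -/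
noncomputable def bfact (n : ℕ) : RatFunc ℚ := bkp n n

/-- The balanced binomial coefficient `[a choose b] = {a}_b / {b}!`. -/
noncomputable def bbinom (a : ℤ) (b : ℕ) : RatFunc ℚ := bkp a b / bfact b

/-- Chebyshev-type polynomials `V_0 = 1`, `V_1 = x`, `V_n = x V_{n-1} - V_{n-2}`. -/
noncomputable def chebV : ℕ → Polynomial (RatFunc ℚ)
  | 0 => 1
  | 1 => Polynomial.X
  | (n + 2) => Polynomial.X * chebV (n + 1) - chebV n

/-- `P_n = ∏_{i=0}^{n-1} (x - v^{2i+1} - v^{-2i-1})`. -/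
noncomputable def PP (n : ℕ) : Polynomial (RatFunc ℚ) :=
  ∏ i ∈ Finset.range n,
    (Polynomial.X - Polynomial.C (vv ^ (2 * i + 1) + vv ^ (-(2 * (i : ℤ) + 1))))

/-- `S_n = ∏_{i=1}^{n} (x^2 - (v^i + v^{-i})^2)`. -/
noncomputable def SS (n : ℕ) : Polynomial (RatFunc ℚ) :=
  ∏ i ∈ Finset.range n,
    (Polynomial.X ^ 2 - Polynomial.C ((vv ^ (i + 1) + vv ^ (-((i : ℤ) + 1))) ^ 2))

/-! ### Auxiliary lemmas -/

noncomputable def xv (c : ℤ) : RatFunc ℚ := vv ^ c + vv ^ (-c)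

lemma vv_ne : vv ≠ 0 := RatFunc.X_ne_zero

lemma bk_one_ne : bk 1 ≠ 0 := by
  intro h
  have h2 : vv ^ (2 : ℕ) - 1 = 0 := by
    have := congrArg (· * vv) h
    simp only [bk, zpow_one, zpow_neg_one, zero_mul, sub_mul, inv_mul_cancel₀ vv_ne] at this
    rw [← this]; ring
  have h3 : (algebraMap (Polynomial ℚ) (RatFunc ℚ)) (Polynomial.X ^ 2 - 1) = 0 := by
    simpa [vv, RatFunc.algebraMap_X] using h2
  have hne : (Polynomial.X ^ 2 - 1 : Polynomial ℚ) ≠ 0 := by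
    intro hh
    have := congrArg (Polynomial.eval 2) hh
    norm_num at this
  exact hne (RatFunc.algebraMap_injective ℚ (by simpa using h3))

lemma bk_mul_bk (s t : ℤ) : bk s * bk t = xv (s + t) - xv (s - t) := by
  simp only [bk, xv, zpow_add₀ vv_ne, zpow_sub₀ vv_ne, zpow_neg, neg_add, neg_sub, sub_eq_add_neg]
  have hs : vv ^ s ≠ 0 := zpow_ne_zero _ vv_ne
  have ht : vv ^ t ≠ 0 := zpow_ne_zero _ vv_ne
  field_simp
  ring

lemma chebV_eval (c : ℤ) : ∀ a : ℕ, (chebV a).eval (xv c) * bk c = bk (c * ((a : ℤ) + 1))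
  | 0 => by simp [chebV, bk]
  | 1 => by
    simp only [chebV, Polynomial.eval_X, xv, bk]
    push_cast
    have hs : vv ^ c ≠ 0 := zpow_ne_zero _ vv_ne
    rw [show c * (2 : ℤ) = c + c by ring, zpow_add₀ vv_ne, neg_add, zpow_add₀ vv_ne]
    field_simp
    ring
  | (n + 2) => by
    have h1 := chebV_eval c (n + 1)
    have h0 := chebV_eval c n
    have key : bk (c * ((n : ℤ) + 2 + 1)) =
        xv c * bk (c * ((n : ℤ) + 1 + 1)) - bk (c * ((n : ℤ) + 1)) := by
      simp only [bk, xv]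
      rw [show c * ((n : ℤ) + 2 + 1) = c + c * ((n : ℤ) + 1 + 1) by ring,
        show c * ((n : ℤ) + 1) = (c * ((n : ℤ) + 1 + 1)) - c by ring]
      have hs : vv ^ c ≠ 0 := zpow_ne_zero _ vv_ne
      have ht : vv ^ (c * ((n : ℤ) + 1 + 1)) ≠ 0 := zpow_ne_zero _ vv_ne
      rw [zpow_add₀ vv_ne, zpow_sub₀ vv_ne, neg_add, zpow_add₀ vv_ne, neg_sub, zpow_sub₀ vv_ne,
        zpow_neg, zpow_neg]
      field_simp
      ring
    push_cast
    push_cast at h1 h0 key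
    rw [show (chebV (n + 2)) = Polynomial.X * chebV (n + 1) - chebV n from rfl]
    simp only [Polynomial.eval_sub, Polynomial.eval_mul, Polynomial.eval_X]
    rw [sub_mul, mul_assoc, h1, h0, key]

open Polynomial Finset Submodule

abbrev F := RatFunc ℚ

lemma X_mul_chebV (n : ℕ) : X * chebV (n + 1) = chebV (n + 2) + chebV n := by
  rw [show chebV (n + 2) = X * chebV (n + 1) - chebV n from rfl]; ring

lemma X_mul_chebV0 : (X : Polynomial F) * chebV 0 = chebV 1 := by
  simp [chebV]

lemma span_mul {S : Set (Polynomial F)} {T : Submodule F (Polynomial F)} (h : Polynomial F)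
    (hgen : ∀ x ∈ S, x * h ∈ T) : ∀ g ∈ Submodule.span F S, g * h ∈ T := by
  intro g hg
  induction hg using Submodule.span_induction with
  | mem x hx => exact hgen x hx
  | zero => simp
  | add x y _ _ hx hy => rw [add_mul]; exact T.add_mem hx hy
  | smul c x _ hx => rw [smul_mul_assoc]; exact T.smul_mem c hx

lemma chebV_mem_lt {a m : ℕ} (h : a < m) :
    chebV a ∈ Submodule.span F (chebV '' {x | x < m}) :=
  Submodule.subset_span ⟨a, h, rfl⟩

lemma chebV_mul_X_mem {a m : ℕ} (h : a < m) (c : F) :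
    chebV a * (X - C c) ∈ Submodule.span F (chebV '' {x | x < m + 1}) := by
  rw [mul_sub, mul_comm, mul_comm (chebV a) (C c), ← smul_eq_C_mul]
  refine Submodule.sub_mem _ ?_ (Submodule.smul_mem _ _ (chebV_mem_lt (by omega)))
  cases a with
  | zero => rw [X_mul_chebV0]; exact chebV_mem_lt (by omega)
  | succ b =>
      rw [X_mul_chebV]
      exact Submodule.add_mem _ (chebV_mem_lt (by omega)) (chebV_mem_lt (by omega))

lemma PP_split (m : ℕ) : PP m - chebV m ∈ Submodule.span F (chebV '' {x | x < m}) := by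
  induction m with
  | zero => simp [PP, chebV]
  | succ m ih =>
      have hP : PP (m + 1) = PP m *
          (X - C (vv ^ (2 * m + 1) + vv ^ (-(2 * (m : ℤ) + 1)))) := prod_range_succ _ _
      set c := vv ^ (2 * m + 1) + vv ^ (-(2 * (m : ℤ) + 1)) with hc
      have key : PP (m + 1) - chebV (m + 1) =
          (chebV m * (X - C c) - chebV (m + 1)) + (PP m - chebV m) * (X - C c) := by
        rw [hP]; ring
      rw [key]
      refine Submodule.add_mem _ ?_ ?_
      · cases m with
        | zero =>
            have : chebV 0 * (X - C c) - chebV 1 = -(c • chebV 0) := by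
              simp [chebV, smul_eq_C_mul]
            rw [this]
            exact Submodule.neg_mem _ (Submodule.smul_mem _ _ (chebV_mem_lt (by omega)))
        | succ k =>
            have : chebV (k + 1) * (X - C c) - chebV (k + 2) =
                chebV k - c • chebV (k + 1) := by
              rw [mul_sub, mul_comm, X_mul_chebV, smul_eq_C_mul]; ring
            rw [this]
            exact Submodule.sub_mem _ (chebV_mem_lt (by omega))
              (Submodule.smul_mem _ _ (chebV_mem_lt (by omega)))
      · exact span_mul _ (fun x hx => by
          obtain ⟨a, ha, rfl⟩ := hx
          exact chebV_mul_X_mem ha c) _ ih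

lemma X2_mul_chebV (j : ℕ) :
    (X : Polynomial F) ^ 2 * chebV (j + 2) =
      chebV (j + 4) + chebV (j + 2) + chebV (j + 2) + chebV j := by
  rw [sq, mul_assoc, X_mul_chebV (j + 1), mul_add, X_mul_chebV (j + 2), X_mul_chebV j]
  ring

lemma X2_mul_chebV0 : (X : Polynomial F) ^ 2 * chebV 0 = chebV 2 + chebV 0 := by
  have : (X : Polynomial F) ^ 2 = X * chebV 1 := by simp [chebV, sq]
  rw [this, X_mul_chebV 0]
  simp [chebV]

lemma chebVE_mem_lt {k n : ℕ} (h : k < n) :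
    chebV (2 * k) ∈ Submodule.span F ((fun k => chebV (2 * k)) '' {x | x < n}) :=
  Submodule.subset_span ⟨k, h, rfl⟩

lemma chebV_mul_X2_mem {k n : ℕ} (h : k < n) (c : F) :
    chebV (2 * k) * ((X : Polynomial F) ^ 2 - C c) ∈
      Submodule.span F ((fun k => chebV (2 * k)) '' {x | x < n + 1}) := by
  rw [mul_sub, mul_comm, mul_comm (chebV (2 * k)) (C c), ← smul_eq_C_mul]
  refine Submodule.sub_mem _ ?_ (Submodule.smul_mem _ _ (chebVE_mem_lt (by omega)))
  cases k with
  | zero =>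
      rw [show 2 * 0 = 0 from rfl, X2_mul_chebV0]
      exact Submodule.add_mem _ ((show 2 * 1 = 2 from rfl) ▸ chebVE_mem_lt (k := 1) (by omega))
        ((show 2 * 0 = 0 from rfl) ▸ chebVE_mem_lt (k := 0) (by omega))
  | succ b =>
      rw [show 2 * (b + 1) = 2 * b + 2 by ring, X2_mul_chebV]
      refine Submodule.add_mem _ (Submodule.add_mem _ (Submodule.add_mem _ ?_ ?_) ?_) ?_
      · exact (show 2 * b + 4 = 2 * (b + 2) by ring) ▸ chebVE_mem_lt (by omega)
      · exact (show 2 * b + 2 = 2 * (b + 1) by ring) ▸ chebVE_mem_lt (by omega)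
      · exact (show 2 * b + 2 = 2 * (b + 1) by ring) ▸ chebVE_mem_lt (by omega)
      · exact chebVE_mem_lt (by omega)

lemma SS_split (n : ℕ) : SS n - chebV (2 * n) ∈
    Submodule.span F ((fun k => chebV (2 * k)) '' {x | x < n}) := by
  induction n with
  | zero => simp [SS, chebV]
  | succ n ih =>
      have hP : SS (n + 1) = SS n *
          ((X : Polynomial F) ^ 2 - C ((vv ^ (n + 1) + vv ^ (-((n : ℤ) + 1))) ^ 2)) :=
        prod_range_succ _ _
      set c := ((vv ^ (n + 1) + vv ^ (-((n : ℤ) + 1))) ^ 2 : F) with hc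
      have key : SS (n + 1) - chebV (2 * (n + 1)) =
          (chebV (2 * n) * ((X : Polynomial F) ^ 2 - C c) - chebV (2 * (n + 1))) +
            (SS n - chebV (2 * n)) * ((X : Polynomial F) ^ 2 - C c) := by
        rw [hP]; ring
      rw [key]
      refine Submodule.add_mem _ ?_ ?_
      · cases n with
        | zero =>
            have : chebV (2 * 0) * ((X : Polynomial F) ^ 2 - C c) - chebV (2 * (0 + 1)) =
                chebV (2 * 0) - c • chebV (2 * 0) := by
              rw [show 2 * 0 = 0 from rfl, mul_sub, mul_comm, X2_mul_chebV0, smul_eq_C_mul,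
                mul_comm (C c)]
              norm_num [show (2 : ℕ) = 2 * 1 by ring]
              ring
            rw [this]
            exact Submodule.sub_mem _ (chebVE_mem_lt (by omega))
              (Submodule.smul_mem _ _ (chebVE_mem_lt (by omega)))
        | succ k =>
            have : chebV (2 * (k + 1)) * ((X : Polynomial F) ^ 2 - C c) - chebV (2 * (k + 2)) =
                chebV (2 * (k + 1)) + chebV (2 * (k + 1)) + chebV (2 * k)
                  - c • chebV (2 * (k + 1)) := by
              rw [mul_sub, mul_comm, show 2 * (k + 1) = 2 * k + 2 by ring, X2_mul_chebV,
                smul_eq_C_mul, mul_comm (C c), show 2 * (k + 2) = 2 * k + 4 by ring]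
              ring
            rw [this]
            refine Submodule.sub_mem _ (Submodule.add_mem _ (Submodule.add_mem _ ?_ ?_) ?_)
              (Submodule.smul_mem _ _ (chebVE_mem_lt (by omega))) <;>
              exact chebVE_mem_lt (by omega)
      · exact span_mul _ (fun x hx => by
          obtain ⟨a, ha, rfl⟩ := hx
          exact chebV_mul_X2_mem ha c) _ ih

lemma PP_factor_eval (x : RatFunc ℚ) (i : ℕ) :
    (X - Polynomial.C (vv ^ (2 * i + 1) + vv ^ (-(2 * (i : ℤ) + 1)))).eval x
      = x - xv (2 * (i : ℤ) + 1) := by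
  simp only [eval_sub, eval_X, eval_C, xv]
  congr 2

lemma SS_factor_eval (x : RatFunc ℚ) (i : ℕ) :
    ((X : Polynomial (RatFunc ℚ)) ^ 2
        - Polynomial.C ((vv ^ (i + 1) + vv ^ (-((i : ℤ) + 1))) ^ 2)).eval x
      = x ^ 2 - xv ((i : ℤ) + 1) ^ 2 := by
  simp only [eval_sub, eval_pow, eval_X, eval_C, xv]
  congr 3

lemma PP_eval_zero {k m : ℕ} (h : k < m) : (PP m).eval (xv (2 * (k : ℤ) + 1)) = 0 := by
  rw [PP, eval_prod]
  refine Finset.prod_eq_zero (mem_range.mpr h) ?_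
  rw [PP_factor_eval, sub_self]

lemma SS_eval_zero {a n : ℕ} (h : a < n) : (SS n).eval (xv ((a : ℤ) + 1)) = 0 := by
  rw [SS, eval_prod]
  refine Finset.prod_eq_zero (mem_range.mpr h) ?_
  rw [SS_factor_eval, sub_self]

lemma PP_eval_top (m : ℕ) : (PP m).eval (xv (2 * (m : ℤ) + 1)) =
    ∏ i ∈ Finset.range m, (bk ((m : ℤ) + i + 1) * bk ((m : ℤ) - i)) := by
  rw [PP, eval_prod]
  refine Finset.prod_congr rfl fun i _ => ?_
  rw [PP_factor_eval, bk_mul_bk,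
    show ((m : ℤ) + i + 1) + ((m : ℤ) - i) = 2 * (m : ℤ) + 1 by ring,
    show ((m : ℤ) + i + 1) - ((m : ℤ) - i) = 2 * (i : ℤ) + 1 by ring]

lemma final_prod (m : ℕ) :
    (∏ i ∈ Finset.range m, (bk ((m : ℤ) + i + 1) * bk ((m : ℤ) - i))) * bk (2 * (m : ℤ) + 1)
      / bk 1 = bkp (2 * (m : ℤ) + 1) (2 * m) := by
  have hA : ∏ i ∈ Finset.range m, bk ((m : ℤ) - i) = ∏ j ∈ Finset.range m, bk ((j : ℤ) + 1) := by
    rw [← Finset.prod_range_reflect]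
    refine Finset.prod_congr rfl fun j hj => ?_
    rw [mem_range] at hj
    congr 1
    omega
  have hbkp : bkp (2 * (m : ℤ) + 1) (2 * m) = ∏ j ∈ Finset.range (2 * m), bk ((j : ℤ) + 2) := by
    rw [bkp, ← Finset.prod_range_reflect]
    refine Finset.prod_congr rfl fun j hj => ?_
    rw [mem_range] at hj
    congr 1
    omega
  have hG : ∏ j ∈ Finset.range (2 * m + 1), bk ((j : ℤ) + 1) =
      (∏ i ∈ Finset.range m, bk ((i : ℤ) + 1)) * (∏ i ∈ Finset.range m, bk ((m : ℤ) + i + 1))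
        * bk (2 * (m : ℤ) + 1) := by
    rw [Finset.prod_range_succ, show 2 * m = m + m from by ring, Finset.prod_range_add]
    push_cast
    try rw [show (m : ℤ) + (m : ℤ) + 1 = 2 * (m : ℤ) + 1 by ring]
    try ring
  have hG2 : ∏ j ∈ Finset.range (2 * m + 1), bk ((j : ℤ) + 1) =
      bk 1 * ∏ j ∈ Finset.range (2 * m), bk ((j : ℤ) + 2) := by
    rw [Finset.prod_range_succ']
    push_cast
    simp only [show ∀ i : ℕ, (i : ℤ) + 1 + 1 = (i : ℤ) + 2 from fun i => by ring]
    ring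
  rw [div_eq_iff bk_one_ne, Finset.prod_mul_distrib, hA, hbkp]
  linear_combination hG2 - hG

lemma chebV_mem_span (a : ℕ) : chebV a ∈ Submodule.span F (Set.range chebV) :=
  Submodule.subset_span ⟨a, rfl⟩

lemma B_left (B : Polynomial F →ₗ[F] Polynomial F →ₗ[F] F)
    (hB : ∀ a b : ℕ, B (chebV a) (chebV b) = bk (((a : ℤ) + 1) * ((b : ℤ) + 1)) / bk 1)
    (b : ℕ) :
    ∀ f ∈ Submodule.span F (Set.range chebV),
      B f (chebV b) = f.eval (xv ((b : ℤ) + 1)) * bk ((b : ℤ) + 1) / bk 1 := by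
  intro f hf
  induction hf using Submodule.span_induction with
  | mem x hx =>
      obtain ⟨a, rfl⟩ := hx
      rw [hB a b, mul_comm ((a : ℤ) + 1), ← chebV_eval ((b : ℤ) + 1) a]
  | zero => simp
  | add x y _ _ hx hy =>
      rw [map_add, LinearMap.add_apply, hx, hy, eval_add]
      ring
  | smul c x _ hx =>
      rw [map_smul, LinearMap.smul_apply, hx, eval_smul]
      simp only [smul_eq_mul]
      ring

lemma B_right (B : Polynomial F →ₗ[F] Polynomial F →ₗ[F] F)
    (hB : ∀ a b : ℕ, B (chebV a) (chebV b) = bk (((a : ℤ) + 1) * ((b : ℤ) + 1)) / bk 1)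
    (a : ℕ) :
    ∀ g ∈ Submodule.span F (Set.range chebV),
      B (chebV a) g = g.eval (xv ((a : ℤ) + 1)) * bk ((a : ℤ) + 1) / bk 1 := by
  intro g hg
  induction hg using Submodule.span_induction with
  | mem x hx =>
      obtain ⟨b, rfl⟩ := hx
      rw [hB a b, ← chebV_eval ((a : ℤ) + 1) b]
  | zero => simp
  | add x y _ _ hx hy =>
      rw [map_add, hx, hy, eval_add]
      ring
  | smul c x _ hx =>
      rw [map_smul, hx, eval_smul]
      simp only [smul_eq_mul]
      ring

theorem stmt8
    (B : Polynomial (RatFunc ℚ) →ₗ[RatFunc ℚ] Polynomial (RatFunc ℚ) →ₗ[RatFunc ℚ] RatFunc ℚ)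
    (hB : ∀ a b : ℕ, B (chebV a) (chebV b) = bk (((a : ℤ) + 1) * ((b : ℤ) + 1)) / bk 1)
    (m n : ℕ) :
    B (PP m) (SS n) = if m = n then bkp (2 * (m : ℤ) + 1) (2 * m) else 0 := by
  classical
  have hspan_lt : ∀ k : ℕ, Submodule.span F (chebV '' {x | x < k}) ≤
      Submodule.span F (Set.range chebV) := fun k =>
    Submodule.span_mono (by rintro _ ⟨a, _, rfl⟩; exact ⟨a, rfl⟩)
  have hspan_ev : ∀ k : ℕ, Submodule.span F ((fun j => chebV (2 * j)) '' {x | x < k}) ≤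
      Submodule.span F (Set.range chebV) := fun k =>
    Submodule.span_mono (by rintro _ ⟨a, _, rfl⟩; exact ⟨2 * a, rfl⟩)
  have hPm : PP m ∈ Submodule.span F (Set.range chebV) := by
    rw [show PP m = chebV m + (PP m - chebV m) by ring]
    exact Submodule.add_mem _ (chebV_mem_span m) (hspan_lt m (PP_split m))
  have hSn : ∀ k : ℕ, SS k ∈ Submodule.span F (Set.range chebV) := by
    intro k
    rw [show SS k = chebV (2 * k) + (SS k - chebV (2 * k)) by ring]
    exact Submodule.add_mem _ (chebV_mem_span _) (hspan_ev k (SS_split k))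
  have hPPcheb : ∀ k : ℕ, k < m → B (PP m) (chebV (2 * k)) = 0 := by
    intro k hk
    rw [B_left B hB (2 * k) (PP m) hPm,
      show ((2 * k : ℕ) : ℤ) + 1 = 2 * (k : ℤ) + 1 by push_cast; ring,
      PP_eval_zero hk, zero_mul, zero_div]
  by_cases hmn : m = n
  · subst hmn
    rw [if_pos rfl, show SS m = chebV (2 * m) + (SS m - chebV (2 * m)) by ring, map_add]
    have hz : ∀ g ∈ Submodule.span F ((fun j => chebV (2 * j)) '' {x | x < m}),
        B (PP m) g = 0 := by
      intro g hg
      induction hg using Submodule.span_induction with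
      | mem x hx =>
          obtain ⟨k, hk, rfl⟩ := hx
          exact hPPcheb k hk
      | zero => simp
      | add x y _ _ hx hy => rw [map_add, hx, hy, add_zero]
      | smul c x _ hx => rw [map_smul, hx, smul_zero]
    rw [hz _ (SS_split m), add_zero,
      B_left B hB (2 * m) (PP m) hPm,
      show ((2 * m : ℕ) : ℤ) + 1 = 2 * (m : ℤ) + 1 by push_cast; ring,
      PP_eval_top, final_prod]
  · rw [if_neg hmn]
    rcases Nat.lt_or_ge m n with h | h
    · have hz : ∀ g ∈ Submodule.span F (chebV '' {x | x < m}), B g (SS n) = 0 := by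
        intro g hg
        induction hg using Submodule.span_induction with
        | mem x hx =>
            obtain ⟨a, ha, rfl⟩ := hx
            have ha' : a < m := ha
            rw [B_right B hB a (SS n) (hSn n), SS_eval_zero (by omega), zero_mul, zero_div]
        | zero => simp
        | add x y _ _ hx hy => rw [map_add, LinearMap.add_apply, hx, hy, add_zero]
        | smul c x _ hx => rw [map_smul, LinearMap.smul_apply, hx, smul_zero]
      rw [show PP m = chebV m + (PP m - chebV m) by ring, map_add, LinearMap.add_apply,
        B_right B hB m (SS n) (hSn n), SS_eval_zero h, hz _ (PP_split m)]
      simp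
    · have hz : ∀ g ∈ Submodule.span F ((fun j => chebV (2 * j)) '' {x | x < n + 1}),
          B (PP m) g = 0 := by
        intro g hg
        induction hg using Submodule.span_induction with
        | mem x hx =>
            obtain ⟨k, hk, rfl⟩ := hx
            have hk' : k < n + 1 := hk
            exact hPPcheb k (by omega)
        | zero => simp
        | add x y _ _ hx hy => rw [map_add, hx, hy, add_zero]
        | smul c x _ hx => rw [map_smul, hx, smul_zero]
      refine hz _ ?_
      rw [show SS n = chebV (2 * n) + (SS n - chebV (2 * n)) by ring]
      exact Submodule.add_mem _ (Submodule.subset_span ⟨n, show n < n + 1 by omega, rfl⟩)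
        (Submodule.span_mono (by rintro _ ⟨k, hk, rfl⟩; exact ⟨k, show k < n + 1 from by have : k < n := hk; omega, rfl⟩) (SS_split n))
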